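/- Let n ≥ 1 and let S ⊆ {1,…,n−1} be any (possibly empty) set of positive integers less than n. Let G be a finite simple graph, G' a finite simple graph with V(G) ⊆ V(G'), and Blue_0, Red_0 disjoint subsets of V(G') \ V(G) such that: (a) every vertex of V(G') \ (V(G) ∪ Blue_0 ∪ Red_0) is at graph distance at most n in G' from some vertex of Blue_0 and at distance at most n from some vertex of Red_0; (b) every vertex of V(G) is at distance at least n+1 from every vertex of Blue_0 ∪ Red_0; (c) for distinct u, v ∈ V(G), dist_{G'}(u,v) = n if uv is an edge of G, and dist_{G'}(u,v) ≥ n+1 otherwise; (d) any two distinct vertices of Blue_0 ∪ Red_0 are at distance at least n+1. Then the distance game D⟨{1,…,n},S⟩ on G' starting from the position with blue pieces on Blue_0 and red pieces on Red_0 is play-for-play equivalent to Snort on G starting from the empty position; in particular the player moving first (respectively, second) has a winning strategy in one game if and only if in the other. -/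

import Mathlib

namespace SetTheory

universe w

inductive PGame : Type (w + 1)
  | mk : ∀ α β : Type w, (α → PGame) → (β → PGame) → PGame

namespace PGame

def LeftMoves : PGame.{w} → Type w
  | mk l _ _ _ => l

def RightMoves : PGame.{w} → Type w
  | mk _ r _ _ => r

def moveLeft : ∀ g : PGame.{w}, LeftMoves g → PGame.{w}
  | mk _ _ L _ => L

def moveRight : ∀ g : PGame.{w}, RightMoves g → PGame.{w}
  | mk _ _ _ R => R

instance : Zero PGame := ⟨⟨PEmpty, PEmpty, PEmpty.elim, PEmpty.elim⟩⟩

noncomputable def leLF (x : PGame.{w}) : PGame.{w} → Prop × Prop :=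
  PGame.rec (motive := fun _ => PGame.{w} → Prop × Prop)
    (fun _ _ xL xR ihL ihR y =>
      PGame.rec (motive := fun _ => Prop × Prop)
        (fun yl yr yL yR jhL jhR =>
          ((∀ i, (ihL i (mk yl yr yL yR)).2) ∧ ∀ j, (jhR j).2,
            (∃ i, (jhL i).1) ∨ ∃ j, (ihR j (mk yl yr yL yR)).1)) y) x

noncomputable instance : LE PGame := ⟨fun x y => (leLF x y).1⟩

def LF (x y : PGame) : Prop :=
  ¬y ≤ x

infixl:50 " ⧏ " => SetTheory.PGame.LF

inductive Relabelling : PGame.{w} → PGame.{w} → Type (w + 1)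
  | mk : ∀ {x y : PGame} (L : x.LeftMoves ≃ y.LeftMoves) (R : x.RightMoves ≃ y.RightMoves),
      (∀ i, Relabelling (x.moveLeft i) (y.moveLeft (L i))) →
        (∀ j, Relabelling (x.moveRight j) (y.moveRight (R j))) → Relabelling x y

infixl:50 " ≡r " => SetTheory.PGame.Relabelling

end PGame

end SetTheory

open SimpleGraph SetTheory

/-- In the distance game `D⟨D,S⟩` on the graph `G`, from the position with blue pieces on
`blue` and red pieces on `red`, Left may legally place a blue piece on the vertex `v`. -/
def LeftMove {W : Type*} (G : SimpleGraph W) (D S : Set ℕ) (blue red : Finset W) (v : W) : Prop :=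
  v ∉ blue ∧ v ∉ red ∧ (∀ r ∈ red, ∀ d ∈ D, G.edist v r ≠ (d : ℕ∞)) ∧
    ∀ b ∈ blue, ∀ s ∈ S, G.edist v b ≠ (s : ℕ∞)

/-- Right may legally place a red piece on the vertex `v`. -/
def RightMove {W : Type*} (G : SimpleGraph W) (D S : Set ℕ) (blue red : Finset W) (v : W) : Prop :=
  v ∉ blue ∧ v ∉ red ∧ (∀ b ∈ blue, ∀ d ∈ D, G.edist v b ≠ (d : ℕ∞)) ∧
    ∀ r ∈ red, ∀ s ∈ S, G.edist v r ≠ (s : ℕ∞)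

/-- The distance game `D⟨D,S⟩` on `G` from the position `(blue, red)`, as a combinatorial
game (normal play: a player with no legal move loses). -/
def distGame {W : Type*} [Fintype W] [DecidableEq W] (G : SimpleGraph W) (D S : Set ℕ)
    (blue red : Finset W) : PGame :=
  PGame.mk {v // LeftMove G D S blue red v} {v // RightMove G D S blue red v}
    (fun x => distGame G D S (insert x.1 blue) red)
    (fun x => distGame G D S blue (insert x.1 red))
termination_by ((blue ∪ red)ᶜ).card
decreasing_by
  · obtain ⟨h1, h2, -, -⟩ := x.2
    calc ((insert x.1 blue ∪ red)ᶜ).card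
        = (((blue ∪ red)ᶜ).erase x.1).card := by
          rw [Finset.insert_union, Finset.compl_insert]
      _ < ((blue ∪ red)ᶜ).card :=
          Finset.card_erase_lt_of_mem (Finset.mem_compl.2 (by simp [h1, h2]))
  · obtain ⟨h1, h2, -, -⟩ := x.2
    calc ((blue ∪ insert x.1 red)ᶜ).card
        = (((blue ∪ red)ᶜ).erase x.1).card := by
          rw [Finset.union_insert, Finset.compl_insert]
      _ < ((blue ∪ red)ᶜ).card :=
          Finset.card_erase_lt_of_mem (Finset.mem_compl.2 (by simp [h1, h2]))

/-- `BiGraph-Node-Kayles` on a bipartite graph `G` with parts `VL`, `VR`, from the position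
where `occ` is the set of occupied vertices: players alternately occupy vertices that are
neither equal nor adjacent to a previously occupied vertex, Left occupying only vertices of
`VL` and Right only vertices of `VR`; a player with no legal move loses. -/
def bnkGame {V : Type*} [Fintype V] [DecidableEq V] (G : SimpleGraph V) (VL VR : Finset V)
    (occ : Finset V) : PGame :=
  PGame.mk {v // v ∈ VL ∧ v ∉ occ ∧ ∀ u ∈ occ, ¬G.Adj v u}
    {v // v ∈ VR ∧ v ∉ occ ∧ ∀ u ∈ occ, ¬G.Adj v u}
    (fun x => bnkGame G VL VR (insert x.1 occ))
    (fun x => bnkGame G VL VR (insert x.1 occ))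
termination_by occᶜ.card
decreasing_by
  all_goals
  · obtain ⟨-, h1, -⟩ := x.2
    calc ((insert x.1 occ)ᶜ).card = (occᶜ.erase x.1).card := by rw [Finset.compl_insert]
      _ < occᶜ.card := Finset.card_erase_lt_of_mem (Finset.mem_compl.2 h1)

universe u

/-!
A vertex of `G'` outside `ι(V)` and the starting pieces lies within distance `n` of a piece of
each colour, so `D = {1,…,n}` forbids it to both players for the whole game. The starting pieces
are more than `n` away from `ι(V)`, so they forbid nothing there, and two vertices of `ι(V)` are
within distance `n` of each other exactly when they are adjacent in `G`, at distance exactly `n`;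
since every element of `S` is less than `n`, the rule `S` never applies. Hence at every position
reached the legal moves are the images under `ι` of the legal Snort moves, so the two game trees
are relabellings of each other, and relabellings preserve the outcome.
-/

namespace SetTheory.PGame

lemma leLF_mk (xl xr : Type u) (xL : xl → PGame.{u}) (xR : xr → PGame.{u})
    (yl yr : Type u) (yL : yl → PGame.{u}) (yR : yr → PGame.{u}) :
    leLF (mk xl xr xL xR) (mk yl yr yL yR) =
      ((∀ i, (leLF (xL i) (mk yl yr yL yR)).2) ∧ ∀ j, (leLF (mk xl xr xL xR) (yR j)).2,
        (∃ i, (leLF (mk xl xr xL xR) (yL i)).1) ∨ ∃ j, (leLF (xR j) (mk yl yr yL yR)).1) :=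
  rfl

lemma zero_def : (0 : PGame.{u}) = mk PEmpty PEmpty PEmpty.elim PEmpty.elim :=
  rfl

-- `leLF x 0` and `leLF 0 x` recurse into each other, so they are handled together.
theorem Relabelling.leLF_zero_eq {x y : PGame.{u}} (r : x ≡r y) :
    leLF x 0 = leLF y 0 ∧ leLF 0 x = leLF 0 y := by
  induction r with
  | @mk x y L R _ _ ihL ihR =>
    cases x
    cases y
    simp only [zero_def, moveLeft, moveRight] at ihL ihR ⊢
    simp only [leLF_mk, IsEmpty.forall_iff, IsEmpty.exists_iff, and_true, true_and,
      false_or, or_false]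
    refine ⟨Prod.ext (propext ?_) (propext ?_), Prod.ext (propext ?_) (propext ?_)⟩
    · exact L.forall_congr fun i => by rw [(ihL i).1]
    · exact R.exists_congr fun j => by rw [(ihR j).1]
    · exact R.forall_congr fun j => by rw [(ihR j).2]
    · exact L.exists_congr fun i => by rw [(ihL i).2]

theorem Relabelling.le_zero_iff {x y : PGame.{u}} (r : x ≡r y) : x ≤ 0 ↔ y ≤ 0 := by
  change (leLF x 0).1 ↔ (leLF y 0).1
  rw [r.leLF_zero_eq.1]

theorem Relabelling.zero_le_iff {x y : PGame.{u}} (r : x ≡r y) : 0 ≤ x ↔ 0 ≤ y := by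
  change (leLF 0 x).1 ↔ (leLF 0 y).1
  rw [r.leLF_zero_eq.2]

theorem Relabelling.lf_zero_iff {x y : PGame.{u}} (r : x ≡r y) : x ⧏ 0 ↔ y ⧏ 0 :=
  not_congr r.zero_le_iff

theorem Relabelling.zero_lf_iff {x y : PGame.{u}} (r : x ≡r y) : 0 ⧏ x ↔ 0 ⧏ y :=
  not_congr r.le_zero_iff

def Relabelling.mk' {x y : PGame.{u}} (L : y.LeftMoves ≃ x.LeftMoves)
    (R : y.RightMoves ≃ x.RightMoves) (hL : ∀ i, x.moveLeft (L i) ≡r y.moveLeft i)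
    (hR : ∀ j, x.moveRight (R j) ≡r y.moveRight j) : x ≡r y :=
  Relabelling.mk L.symm R.symm
    (fun i => by simpa only [L.apply_symm_apply] using hL (L.symm i))
    (fun j => by simpa only [R.apply_symm_apply] using hR (R.symm j))

end SetTheory.PGame

open Finset SetTheory.PGame

noncomputable def Function.Embedding.subtypeEquivOfRange {V W : Type*} (ι : V ↪ W)
    {P : W → Prop} {Q : V → Prop} (hPQ : ∀ v, P (ι v) ↔ Q v) (hP : ∀ w, P w → w ∈ Set.range ι) :
    {v // Q v} ≃ {w // P w} :=
  Equiv.ofBijective (fun v => ⟨ι v, (hPQ v).2 v.2⟩)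
    ⟨fun _ _ h => Subtype.ext (ι.injective (congrArg Subtype.val h)), fun ⟨w, hw⟩ => by
      obtain ⟨v, rfl⟩ := hP w hw
      exact ⟨⟨v, (hPQ v).1 hw⟩, rfl⟩⟩

theorem Finset.card_compl_insert_lt {α : Type*} [Fintype α] [DecidableEq α] {s : Finset α}
    {a : α} (ha : a ∉ s) : (insert a s)ᶜ.card < sᶜ.card := by
  rw [compl_insert]
  exact card_erase_lt_of_mem (mem_compl.2 ha)

theorem SimpleGraph.forall_mem_Icc_edist_ne_iff {V : Type*} (G : SimpleGraph V) {u v : V}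
    (huv : u ≠ v) (n : ℕ) : (∀ d ∈ Set.Icc 1 n, G.edist u v ≠ d) ↔ (n : ℕ∞) < G.edist u v := by
  constructor
  · intro h
    by_contra! hle
    have hpos := G.edist_pos_of_ne huv
    lift G.edist u v to ℕ using (hle.trans_lt (ENat.natCast_lt_top n)).ne with d hd
    exact h d ⟨by exact_mod_cast hpos, by exact_mod_cast hle⟩ rfl
  · rintro h d ⟨-, hd⟩ heq
    exact (heq ▸ h).not_ge (by exact_mod_cast hd)

/-- Hypothesis (c): `ι` scales the graph metric of `G` by `n`, up to distance `n`. -/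
def IsScaledEmbedding {V W : Type*} (G : SimpleGraph V) (G' : SimpleGraph W) (n : ℕ)
    (ι : V ↪ W) : Prop :=
  ∀ u v : V, u ≠ v →
    (G.Adj u v → G'.edist (ι u) (ι v) = (n : ℕ∞)) ∧
    (¬G.Adj u v → (n : ℕ∞) + 1 ≤ G'.edist (ι u) (ι v))

namespace IsScaledEmbedding

variable {V W : Type*} {G : SimpleGraph V} {G' : SimpleGraph W} {n : ℕ} {ι : V ↪ W}

theorem le_edist (h : IsScaledEmbedding G G' n ι) {u v : V} (huv : u ≠ v) :
    (n : ℕ∞) ≤ G'.edist (ι u) (ι v) := by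
  by_cases hadj : G.Adj u v
  · exact ((h u v huv).1 hadj).ge
  · exact le_self_add.trans ((h u v huv).2 hadj)

theorem not_adj_iff (h : IsScaledEmbedding G G' n ι) {u v : V} (huv : u ≠ v) :
    ¬G.Adj u v ↔ (n : ℕ∞) < G'.edist (ι u) (ι v) := by
  refine ⟨fun hadj => ?_, fun hlt hadj => hlt.ne' ((h u v huv).1 hadj)⟩
  exact (ENat.add_one_le_iff (ENat.natCast_ne_top n)).mp ((h u v huv).2 hadj)

end IsScaledEmbedding

theorem rightMove_iff_leftMove {W : Type*} (G : SimpleGraph W) (D S : Set ℕ)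
    (blue red : Finset W) (v : W) : RightMove G D S blue red v ↔ LeftMove G D S red blue v := by
  unfold RightMove LeftMove
  tauto

section SnortPositions

variable {V W : Type*} {G : SimpleGraph V} {G' : SimpleGraph W} {n : ℕ} {ι : V ↪ W}
  {S : Set ℕ} {Blue0 Red0 : Finset W}

theorem leftMove_map_iff [DecidableEq W] (hS : ∀ s ∈ S, s < n) (hc : IsScaledEmbedding G G' n ι)
    (hB0 : ∀ v, ι v ∉ Blue0) (hR0 : ∀ v, ι v ∉ Red0)
    (hbB : ∀ v, ∀ b ∈ Blue0, (n : ℕ∞) + 1 ≤ G'.edist (ι v) b)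
    (hbR : ∀ v, ∀ r ∈ Red0, (n : ℕ∞) + 1 ≤ G'.edist (ι v) r) (B R : Finset V) (v : V) :
    LeftMove G' (Set.Icc 1 n) S (Blue0 ∪ B.map ι) (Red0 ∪ R.map ι) (ι v) ↔
      LeftMove G {1} ∅ B R v := by
  have hfar : ∀ w, (n : ℕ∞) + 1 ≤ G'.edist (ι v) w → ∀ d ≤ n, G'.edist (ι v) w ≠ d := by
    intro w hw d hd heq
    rw [heq, ENat.add_one_le_iff (ENat.natCast_ne_top n)] at hw
    exact hw.not_ge (by exact_mod_cast hd)
  have hmem : ∀ (X : Finset W) (Y : Finset V), (∀ v, ι v ∉ X) → (ι v ∉ X ∪ Y.map ι ↔ v ∉ Y) :=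
    fun X Y hX => by simp [hX]
  unfold LeftMove
  rw [hmem _ _ hB0, hmem _ _ hR0]
  refine and_congr_right fun hvB => and_congr_right fun hvR => ?_
  have hSfree : ∀ b ∈ Blue0 ∪ B.map ι, ∀ s ∈ S, G'.edist (ι v) b ≠ s := by
    simp only [forall_mem_union, forall_mem_map]
    refine ⟨fun b hb s hs => hfar b (hbB v b hb) s (hS s hs).le, fun b hb s hs heq => ?_⟩
    have hvb : v ≠ b := fun h => hvB (h ▸ hb)
    exact (hS s hs).not_ge (by exact_mod_cast heq ▸ hc.le_edist hvb)
  have hRed0 : ∀ r ∈ Red0, ∀ d ∈ Set.Icc 1 n, G'.edist (ι v) r ≠ d :=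
    fun r hr d hd => hfar r (hbR v r hr) d hd.2
  have hD : (∀ r ∈ Red0 ∪ R.map ι, ∀ d ∈ Set.Icc 1 n, G'.edist (ι v) r ≠ d) ↔
      ∀ r ∈ R, ∀ d ∈ ({1} : Set ℕ), G.edist v r ≠ d := by
    rw [forall_mem_union, and_iff_right hRed0, forall_mem_map]
    refine forall₂_congr fun r hr => ?_
    have hvr : v ≠ r := fun h => hvR (h ▸ hr)
    rw [G'.forall_mem_Icc_edist_ne_iff (ι.injective.ne hvr), ← hc.not_adj_iff hvr]
    simp only [Set.mem_singleton_iff, forall_eq, Nat.cast_one, ne_eq, edist_eq_one_iff_adj]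
  rw [hD, and_iff_left hSfree]
  exact (and_iff_left fun _ _ _ hs => hs.elim).symm

theorem mem_range_of_leftMove
    (haR : ∀ w, (∀ v, ι v ≠ w) → w ∉ Blue0 → w ∉ Red0 → ∃ r ∈ Red0, G'.edist w r ≤ (n : ℕ∞))
    {blue red : Finset W} (hblue : Blue0 ⊆ blue) (hred : Red0 ⊆ red) {w : W}
    (hw : LeftMove G' (Set.Icc 1 n) S blue red w) : w ∈ Set.range ι := by
  obtain ⟨hwblue, hwred, hD, -⟩ := hw
  by_contra hwι
  obtain ⟨r, hr, hwr⟩ := haR w (fun v hv => hwι ⟨v, hv⟩) (fun h => hwblue (hblue h))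
    (fun h => hwred (hred h))
  have hne : w ≠ r := fun h => hwred (hred (h ▸ hr))
  exact hwr.not_gt ((G'.forall_mem_Icc_edist_ne_iff hne n).mp (hD r (hred hr)))

end SnortPositions

theorem nonempty_relabelling_distGame {V W : Type u} [Fintype V] [DecidableEq V] [Fintype W]
    [DecidableEq W] {G : SimpleGraph V} {G' : SimpleGraph W} {n : ℕ} {ι : V ↪ W} {S : Set ℕ}
    {Blue0 Red0 : Finset W} (hS : ∀ s ∈ S, s < n) (hc : IsScaledEmbedding G G' n ι)
    (hB0 : ∀ v, ι v ∉ Blue0) (hR0 : ∀ v, ι v ∉ Red0)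
    (ha : ∀ w : W, (∀ v : V, ι v ≠ w) → w ∉ Blue0 → w ∉ Red0 →
      (∃ b ∈ Blue0, G'.edist w b ≤ (n : ℕ∞)) ∧ (∃ r ∈ Red0, G'.edist w r ≤ (n : ℕ∞)))
    (hbB : ∀ v, ∀ b ∈ Blue0, (n : ℕ∞) + 1 ≤ G'.edist (ι v) b)
    (hbR : ∀ v, ∀ r ∈ Red0, (n : ℕ∞) + 1 ≤ G'.edist (ι v) r) (B R : Finset V) :
    Nonempty (distGame G' (Set.Icc 1 n) S (Blue0 ∪ B.map ι) (Red0 ∪ R.map ι) ≡r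
      distGame G {1} ∅ B R) := by
  have hL := leftMove_map_iff hS hc hB0 hR0 hbB hbR B R
  have hR : ∀ v, RightMove G' (Set.Icc 1 n) S (Blue0 ∪ B.map ι) (Red0 ∪ R.map ι) (ι v) ↔
      RightMove G {1} ∅ B R v := fun v => by
    simp only [rightMove_iff_leftMove, leftMove_map_iff hS hc hR0 hB0 hbR hbB R B v]
  rw [distGame, distGame]
  refine ⟨Relabelling.mk'
    (ι.subtypeEquivOfRange hL fun w => mem_range_of_leftMove (fun w h1 h2 h3 => (ha w h1 h2 h3).2)
      subset_union_left subset_union_left)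
    (ι.subtypeEquivOfRange hR fun w hw => mem_range_of_leftMove
      (fun w h1 h2 h3 => (ha w h1 h3 h2).1) subset_union_left subset_union_left
      ((rightMove_iff_leftMove ..).1 hw))
    (fun v => ?_) (fun v => ?_)⟩
  · have r := (nonempty_relabelling_distGame hS hc hB0 hR0 ha hbB hbR (insert v.1 B) R).some
    rw [map_insert, union_insert] at r
    exact r
  · have r := (nonempty_relabelling_distGame hS hc hB0 hR0 ha hbB hbR B (insert v.1 R)).some
    rw [map_insert, union_insert] at r
    exact r
termination_by ((B ∪ R)ᶜ).card
decreasing_by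
  · rw [insert_union]
    exact card_compl_insert_lt (notMem_union.2 ⟨v.2.1, v.2.2.1⟩)
  · rw [union_insert]
    exact card_compl_insert_lt (notMem_union.2 ⟨v.2.1, v.2.2.1⟩)

open SetTheory.PGame in
theorem stmt10_general {V W : Type u} [Fintype V] [DecidableEq V] [Fintype W] [DecidableEq W]
    (n : ℕ) (S : Set ℕ) (hS : ∀ s ∈ S, 1 ≤ s ∧ s < n)
    (G : SimpleGraph V) (G' : SimpleGraph W) (ι : V ↪ W)
    (Blue0 Red0 : Finset W)
    (hB0 : ∀ v : V, ι v ∉ Blue0) (hR0 : ∀ v : V, ι v ∉ Red0)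
    -- (a) every extra vertex is within distance `n` of `Blue0` and of `Red0`:
    (ha : ∀ w : W, (∀ v : V, ι v ≠ w) → w ∉ Blue0 → w ∉ Red0 →
      (∃ b ∈ Blue0, G'.edist w b ≤ (n : ℕ∞)) ∧ (∃ r ∈ Red0, G'.edist w r ≤ (n : ℕ∞)))
    -- (b) every vertex of `V(G)` is at distance at least `n+1` from `Blue0 ∪ Red0`:
    (hb : ∀ v : V, ∀ w ∈ Blue0 ∪ Red0, (n : ℕ∞) + 1 ≤ G'.edist (ι v) w)
    -- (c) distances between vertices of `V(G)`:
    (hc : ∀ u v : V, u ≠ v →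
      (G.Adj u v → G'.edist (ι u) (ι v) = (n : ℕ∞)) ∧
      (¬G.Adj u v → (n : ℕ∞) + 1 ≤ G'.edist (ι u) (ι v))) :
    -- the two games are play-for-play equivalent:
    Nonempty (distGame G' (Set.Icc 1 n) S Blue0 Red0 ≡r
      distGame G {1} (∅ : Set ℕ) (∅ : Finset V) (∅ : Finset V)) ∧
    -- in particular, the player moving first (respectively, second) has a winning strategy
    -- in one game iff in the other:
    ((0 ⧏ distGame G' (Set.Icc 1 n) S Blue0 Red0 ↔
        0 ⧏ distGame G {1} (∅ : Set ℕ) (∅ : Finset V) (∅ : Finset V)) ∧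
      (0 ≤ distGame G' (Set.Icc 1 n) S Blue0 Red0 ↔
        0 ≤ distGame G {1} (∅ : Set ℕ) (∅ : Finset V) (∅ : Finset V)) ∧
      (distGame G' (Set.Icc 1 n) S Blue0 Red0 ⧏ 0 ↔
        distGame G {1} (∅ : Set ℕ) (∅ : Finset V) (∅ : Finset V) ⧏ 0) ∧
      (distGame G' (Set.Icc 1 n) S Blue0 Red0 ≤ 0 ↔
        distGame G {1} (∅ : Set ℕ) (∅ : Finset V) (∅ : Finset V) ≤ 0)) := by
  have r := (nonempty_relabelling_distGame (fun s hs => (hS s hs).2) hc hB0 hR0 ha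
    (fun v b hb' => hb v b (mem_union_left _ hb')) (fun v r hr => hb v r (mem_union_right _ hr))
    ∅ ∅).some
  rw [map_empty, union_empty, union_empty] at r
  exact ⟨⟨r⟩, r.zero_lf_iff, r.zero_le_iff, r.lf_zero_iff, r.le_zero_iff⟩

open SetTheory.PGame in
/-- for `S ⊆ {1,…,n−1}`, under hypotheses (a)–(d), the distance game
`D⟨{1,…,n},S⟩` on `G'` starting from the position with blue pieces on `Blue0` and red pieces
on `Red0` is play-for-play equivalent to `Snort = D⟨{1},∅⟩` on `G` starting from the empty
position. -/
theorem stmt10 {V W : Type u} [Fintype V] [DecidableEq V] [Fintype W] [DecidableEq W]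
    (n : ℕ) (hn : 1 ≤ n) (S : Set ℕ) (hS : ∀ s ∈ S, 1 ≤ s ∧ s < n)
    (G : SimpleGraph V) (G' : SimpleGraph W) (ι : V ↪ W)
    (Blue0 Red0 : Finset W) (hBR : Disjoint Blue0 Red0)
    (hB0 : ∀ v : V, ι v ∉ Blue0) (hR0 : ∀ v : V, ι v ∉ Red0)
    -- (a) every extra vertex is within distance `n` of `Blue0` and of `Red0`:
    (ha : ∀ w : W, (∀ v : V, ι v ≠ w) → w ∉ Blue0 → w ∉ Red0 →
      (∃ b ∈ Blue0, G'.edist w b ≤ (n : ℕ∞)) ∧ (∃ r ∈ Red0, G'.edist w r ≤ (n : ℕ∞)))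
    -- (b) every vertex of `V(G)` is at distance at least `n+1` from `Blue0 ∪ Red0`:
    (hb : ∀ v : V, ∀ w ∈ Blue0 ∪ Red0, (n : ℕ∞) + 1 ≤ G'.edist (ι v) w)
    -- (c) distances between vertices of `V(G)`:
    (hc : ∀ u v : V, u ≠ v →
      (G.Adj u v → G'.edist (ι u) (ι v) = (n : ℕ∞)) ∧
      (¬G.Adj u v → (n : ℕ∞) + 1 ≤ G'.edist (ι u) (ι v)))
    -- (d) distinct vertices of `Blue0 ∪ Red0` are at distance at least `n+1`:
    (hd : ∀ w₁ ∈ Blue0 ∪ Red0, ∀ w₂ ∈ Blue0 ∪ Red0, w₁ ≠ w₂ →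
      (n : ℕ∞) + 1 ≤ G'.edist w₁ w₂) :
    -- the two games are play-for-play equivalent:
    Nonempty (distGame G' (Set.Icc 1 n) S Blue0 Red0 ≡r
      distGame G {1} (∅ : Set ℕ) (∅ : Finset V) (∅ : Finset V)) ∧
    -- in particular, the player moving first (respectively, second) has a winning strategy
    -- in one game iff in the other:
    ((0 ⧏ distGame G' (Set.Icc 1 n) S Blue0 Red0 ↔
        0 ⧏ distGame G {1} (∅ : Set ℕ) (∅ : Finset V) (∅ : Finset V)) ∧
      (0 ≤ distGame G' (Set.Icc 1 n) S Blue0 Red0 ↔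
        0 ≤ distGame G {1} (∅ : Set ℕ) (∅ : Finset V) (∅ : Finset V)) ∧
      (distGame G' (Set.Icc 1 n) S Blue0 Red0 ⧏ 0 ↔
        distGame G {1} (∅ : Set ℕ) (∅ : Finset V) (∅ : Finset V) ⧏ 0) ∧
      (distGame G' (Set.Icc 1 n) S Blue0 Red0 ≤ 0 ↔
        distGame G {1} (∅ : Set ℕ) (∅ : Finset V) (∅ : Finset V) ≤ 0)) :=
  stmt10_general n S hS G G' ι Blue0 Red0 hB0 hR0 ha hb hc
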